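/- (Coverage of the band.) Under the coupling of Lemma 1 and the calibration (1): if P(T_ℓ(B) ≥ c_ℓ(N(B)) and T_u(B) ≥ c_u(N(B)) for all B ∈ 𝓑) ≥ 1 − α, where T_ℓ(B) = Σ_{i: xᵢ ∈ B} ξᵢ, T_u(B) = N(B) − T_ℓ(B), and ξᵢ are i.i.d. Bernoulli(γ), then P(L(x) ≤ Q_γ(x) ≤ U(x) for all x) ≥ 1 − α, whenever Q_γ is a nondecreasing function such that Q_γ(xᵢ) is a γ-quantile of the distribution of Yᵢ for each i, and L, U are the band functions built from (xᵢ, Yᵢ). -/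

import Mathlib

/-!
On the calibration event every interval `B = [b₁, b₂] ∈ 𝓑` contains at least `cℓ(N B)` indices
with `ξᵢ = 1`, hence with `Yᵢ ≤ Q(xᵢ) ≤ Q(t)` for every `t ≥ b₂` by monotonicity of `Q`, so the
`cℓ(N B)`-th order statistic of those `Yᵢ` lies below `Q(t)`. Symmetrically, at least `cu(N B)`
indices have `ξᵢ = 0`, hence `Yᵢ ≥ Q(t)` for `t ≤ b₁`, so the `(N B + 1 - cu(N B))`-th order
statistic lies above `Q(t)`. Thus the calibration event is contained in the coverage event.
-/

open MeasureTheory Finset ProbabilityTheory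

/-- Extended-real order statistic: the `k`-th smallest of `{y i : i ∈ T}`, with the
conventions `y_{T:0} = -∞` and `y_{T:k} = +∞` for `k > #T`. -/
noncomputable def orderStatE {n : ℕ} (T : Finset (Fin n)) (y : Fin n → ℝ) (k : ℕ) : EReal :=
  if k = 0 then ⊥
  else if k ≤ T.card then ((Multiset.sort (T.val.map y) (· ≤ ·)).getD (k - 1) 0 : ℝ)
  else ⊤

namespace List.Pairwise

variable {α : Type*} [LinearOrder α] {s : List α} {i : ℕ}

theorem getElem_le_of_lt_countP (hs : s.Pairwise (· ≤ ·)) (hi : i < s.length) {c : α}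
    (h : i < s.countP (· ≤ c)) : s[i] ≤ c := by
  by_contra! hc
  have hdrop : ∀ a ∈ s.drop i, s[i] ≤ a := by
    have hsd := hs.drop (i := i)
    rw [drop_eq_getElem_cons hi, pairwise_cons] at hsd
    rw [drop_eq_getElem_cons hi]
    exact forall_mem_cons.2 ⟨le_rfl, hsd.1⟩
  have hzero : (s.drop i).countP (· ≤ c) = 0 :=
    countP_eq_zero.2 fun a ha => by simpa using hc.trans_le (hdrop a ha)
  have htake : (s.take i).countP (· ≤ c) ≤ i := countP_le_length.trans (by simp)
  rw [← take_append_drop i s, countP_append] at h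
  omega

theorem le_getElem_of_length_le_add_countP (hs : s.Pairwise (· ≤ ·)) (hi : i < s.length)
    {c : α} (h : s.length ≤ i + s.countP (c ≤ ·)) : c ≤ s[i] := by
  by_contra! hc
  have htake : ∀ a ∈ s.take (i + 1), a ≤ s[i] := by
    have hst := hs.take (i := i + 1)
    rw [← take_concat_get' s i hi, pairwise_append] at hst
    rw [← take_concat_get' s i hi]
    intro a ha
    rcases mem_append.1 ha with ha | ha
    · exact hst.2.2 a ha _ (mem_singleton_self _)
    · exact (mem_singleton.1 ha).le
  have hzero : (s.take (i + 1)).countP (c ≤ ·) = 0 :=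
    countP_eq_zero.2 fun a ha => by simpa using (htake a ha).trans_lt hc
  have hdrop : (s.drop (i + 1)).countP (c ≤ ·) ≤ s.length - (i + 1) :=
    countP_le_length.trans (by simp)
  rw [← take_append_drop (i + 1) s, countP_append] at h
  simp only [length_append, length_take, length_drop] at h
  omega

end List.Pairwise

section OrderStatistic

variable {n : ℕ} (T : Finset (Fin n)) (y : Fin n → ℝ) (c : ℝ)

theorem countP_sort_map_eq_card_filter (p : ℝ → Prop) [DecidablePred p] :
    (Multiset.sort (T.val.map y) (· ≤ ·)).countP (p ·) = #{i ∈ T | p (y i)} := by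
  rw [← Multiset.coe_countP, Multiset.sort_eq, Multiset.countP_map]
  rfl

theorem length_sort_map_eq_card : (Multiset.sort (T.val.map y) (· ≤ ·)).length = #T := by
  rw [Multiset.length_sort, Multiset.card_map]
  rfl

theorem orderStatE_le_of_le_card_filter {k : ℕ} (hk : k ≤ #{i ∈ T | y i ≤ c}) :
    orderStatE T y k ≤ c := by
  have hkT : k ≤ #T := hk.trans (card_filter_le _ _)
  unfold orderStatE
  split_ifs
  · exact bot_le
  · rw [EReal.coe_le_coe_iff, List.getD_eq_getElem _ _ (by rw [length_sort_map_eq_card]; omega)]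
    refine (Multiset.pairwise_sort _ _).getElem_le_of_lt_countP _ ?_
    rw [countP_sort_map_eq_card_filter T y (· ≤ c)]
    omega

theorem le_orderStatE_card_add_one_sub {r : ℕ} (hr : r ≤ #{i ∈ T | c ≤ y i}) :
    c ≤ orderStatE T y (#T + 1 - r) := by
  have hrT : r ≤ #T := hr.trans (card_filter_le _ _)
  unfold orderStatE
  split_ifs
  · omega
  · rw [EReal.coe_le_coe_iff, List.getD_eq_getElem _ _ (by rw [length_sort_map_eq_card]; omega)]
    refine (Multiset.pairwise_sort _ _).le_getElem_of_length_le_add_countP _ ?_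
    rw [countP_sort_map_eq_card_filter T y (c ≤ ·), length_sort_map_eq_card]
    omega
  · exact le_top

end OrderStatistic

section Counting

variable {ι : Type*} {T : Finset ι} {f : ι → ℕ} {p : ι → Prop} [DecidablePred p]

theorem sum_le_card_filter_of_le_one (hf : ∀ i ∈ T, f i ≤ 1) (hp : ∀ i ∈ T, f i = 1 → p i) :
    ∑ i ∈ T, f i ≤ #{i ∈ T | p i} := by
  rw [card_filter]
  refine sum_le_sum fun i hi => ?_
  split_ifs with h
  · exact hf i hi
  · have := mt (hp i hi) h
    have := hf i hi
    omega

theorem card_sub_sum_le_card_filter (hp : ∀ i ∈ T, f i = 0 → p i) :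
    #T - ∑ i ∈ T, f i ≤ #{i ∈ T | p i} := by
  have hnot : #{i ∈ T | ¬p i} ≤ ∑ i ∈ T, f i := by
    rw [card_filter]
    refine sum_le_sum fun i hi => ?_
    split_ifs with h
    · exact Nat.zero_le _
    · exact Nat.one_le_iff_ne_zero.2 (mt (hp i hi) h)
  have : #{i ∈ T | p i} + #{i ∈ T | ¬p i} = #T := card_filter_add_card_filter_not _
  omega

end Counting

theorem band_coverage_general {n : ℕ}
    {Ω : Type*} [MeasurableSpace Ω] (P : Measure Ω)
    (α : ℝ)
    (x : Fin n → ℝ) (Y : Fin n → Ω → ℝ)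
    (Q : ℝ → ℝ) (hQ : Monotone Q)
    (ξ : Fin n → Ω → ℕ) (hξ01 : ∀ i ω, ξ i ω ≤ 1)
    (h_coupling₁ : ∀ i ω, ξ i ω = 1 → Y i ω ≤ Q (x i))
    (h_coupling₀ : ∀ i ω, ξ i ω = 0 → Q (x i) ≤ Y i ω)
    (𝓑 : Finset (ℝ × ℝ))
    (cℓ cu : ℕ → ℕ)
    (h_calib : ENNReal.ofReal (1 - α) ≤
      P {ω | ∀ B ∈ 𝓑,
        cℓ (univ.filter fun i => x i ∈ Set.Icc B.1 B.2).card
            ≤ ∑ i ∈ univ.filter fun i => x i ∈ Set.Icc B.1 B.2, ξ i ω ∧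
        cu (univ.filter fun i => x i ∈ Set.Icc B.1 B.2).card
            ≤ (univ.filter fun i => x i ∈ Set.Icc B.1 B.2).card
              - ∑ i ∈ univ.filter fun i => x i ∈ Set.Icc B.1 B.2, ξ i ω})
    (L U : Ω → ℝ → EReal)
    (hL : ∀ ω t, L ω t = sSup {v : EReal | ∃ B ∈ 𝓑, B.2 ≤ t ∧
      v = orderStatE (univ.filter fun i => x i ∈ Set.Icc B.1 B.2) (fun i => Y i ω)
            (cℓ (univ.filter fun i => x i ∈ Set.Icc B.1 B.2).card)})
    (hU : ∀ ω t, U ω t = sInf {v : EReal | ∃ B ∈ 𝓑, t ≤ B.1 ∧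
      v = orderStatE (univ.filter fun i => x i ∈ Set.Icc B.1 B.2) (fun i => Y i ω)
            ((univ.filter fun i => x i ∈ Set.Icc B.1 B.2).card + 1
              - cu (univ.filter fun i => x i ∈ Set.Icc B.1 B.2).card)}) :
    ENNReal.ofReal (1 - α) ≤
      P {ω | ∀ t : ℝ, L ω t ≤ (Q t : EReal) ∧ (Q t : EReal) ≤ U ω t} := by
  refine h_calib.trans (measure_mono fun ω hω t => ⟨?_, ?_⟩)
  · rw [hL]
    refine sSup_le ?_
    rintro _ ⟨B, hB, hBt, rfl⟩
    refine orderStatE_le_of_le_card_filter _ _ _ ((hω B hB).1.trans ?_)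
    refine sum_le_card_filter_of_le_one (fun i _ => hξ01 i ω) fun i hi hξ => ?_
    exact (h_coupling₁ i ω hξ).trans (hQ ((mem_filter.1 hi).2.2.trans hBt))
  · rw [hU]
    refine le_sInf ?_
    rintro _ ⟨B, hB, htB, rfl⟩
    refine le_orderStatE_card_add_one_sub _ _ _ ((hω B hB).2.trans ?_)
    refine card_sub_sum_le_card_filter fun i hi hξ => ?_
    exact (hQ (htB.trans (mem_filter.1 hi).2.1)).trans (h_coupling₀ i ω hξ)

/-- **Coverage of the confidence band.**
Given fixed covariates `xᵢ`, responses `Yᵢ` whose `γ`-quantile at `xᵢ` is `Q(xᵢ)`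
for a nondecreasing `Q`, and a coupling with Bernoulli(γ) variables `ξᵢ` as in
Lemma 1 (`ξᵢ = 1 → Yᵢ ≤ Q(xᵢ)`, `ξᵢ = 0 → Yᵢ ≥ Q(xᵢ)`): if the calibration
`P(∀ B ∈ 𝓑, Tℓ(B) ≥ cℓ(N B) ∧ Tu(B) ≥ cu(N B)) ≥ 1 - α` holds, where
`Tℓ(B) = Σ_{i : xᵢ ∈ B} ξᵢ` and `Tu(B) = N(B) - Tℓ(B)`, then the band `(L, U)`
built from `(xᵢ, Yᵢ)` satisfies `P(∀ t, L(t) ≤ Q(t) ≤ U(t)) ≥ 1 - α`. -/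
theorem band_coverage {n : ℕ}
    {Ω : Type*} [MeasurableSpace Ω] (P : Measure Ω) [IsProbabilityMeasure P]
    (γ α : ℝ) (hγ : γ ∈ Set.Ioo (0:ℝ) 1) (hα : α ∈ Set.Ioo (0:ℝ) 1)
    (x : Fin n → ℝ) (Y : Fin n → Ω → ℝ)
    (Q : ℝ → ℝ) (hQ : Monotone Q)
    (hQ_quantile : ∀ i, (P {ω | Y i ω < Q (x i)}).toReal ≤ γ ∧
      γ ≤ (P {ω | Y i ω ≤ Q (x i)}).toReal)
    (ξ : Fin n → Ω → ℕ) (hξ01 : ∀ i ω, ξ i ω ≤ 1)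
    (h_coupling₁ : ∀ i ω, ξ i ω = 1 → Y i ω ≤ Q (x i))
    (h_coupling₀ : ∀ i ω, ξ i ω = 0 → Q (x i) ≤ Y i ω)
    (𝓑 : Finset (ℝ × ℝ)) (h𝓑 : ∀ B ∈ 𝓑, B.1 ≤ B.2)
    (cℓ cu : ℕ → ℕ) (hcℓ : ∀ m, cℓ m ≤ m) (hcu : ∀ m, cu m ≤ m)
    (h_calib : ENNReal.ofReal (1 - α) ≤
      P {ω | ∀ B ∈ 𝓑,
        cℓ (univ.filter fun i => x i ∈ Set.Icc B.1 B.2).card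
            ≤ ∑ i ∈ univ.filter fun i => x i ∈ Set.Icc B.1 B.2, ξ i ω ∧
        cu (univ.filter fun i => x i ∈ Set.Icc B.1 B.2).card
            ≤ (univ.filter fun i => x i ∈ Set.Icc B.1 B.2).card
              - ∑ i ∈ univ.filter fun i => x i ∈ Set.Icc B.1 B.2, ξ i ω})
    (L U : Ω → ℝ → EReal)
    (hL : ∀ ω t, L ω t = sSup {v : EReal | ∃ B ∈ 𝓑, B.2 ≤ t ∧
      v = orderStatE (univ.filter fun i => x i ∈ Set.Icc B.1 B.2) (fun i => Y i ω)
            (cℓ (univ.filter fun i => x i ∈ Set.Icc B.1 B.2).card)})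
    (hU : ∀ ω t, U ω t = sInf {v : EReal | ∃ B ∈ 𝓑, t ≤ B.1 ∧
      v = orderStatE (univ.filter fun i => x i ∈ Set.Icc B.1 B.2) (fun i => Y i ω)
            ((univ.filter fun i => x i ∈ Set.Icc B.1 B.2).card + 1
              - cu (univ.filter fun i => x i ∈ Set.Icc B.1 B.2).card)}) :
    ENNReal.ofReal (1 - α) ≤
      P {ω | ∀ t : ℝ, L ω t ≤ (Q t : EReal) ∧ (Q t : EReal) ≤ U ω t} :=
  band_coverage_general P α x Y Q hQ ξ hξ01 h_coupling₁ h_coupling₀ 𝓑 cℓ cu h_calib L U hL hU
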